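/- arXiv:2311.03147 — 2 statements merged into one kernel-verified Lean document; each statement's English description precedes it below -/
import Mathlib

section
/- For every integer ℘ ≥ 8 with ℘ ≡ 0 (mod 4), the Toeplitz graph T_℘⟨{1, 2, ℘−1}⟩ satisfies ℘/(℘−2) ≤ ldim_f(T_℘⟨{1, 2, ℘−1}⟩) ≤ 2. -/
/-!
Everything rests on the explicit distance in `T_p⟨{1, 2, p-1}⟩`: from `w` to `j` it is
`⌈|w - j| / 2⌉`, unless the route through the edge `{0, p-1}` is shorter. A function on the
vertices that vanishes only at `w`, grows by at most one along edges and can always be decreased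
by a step is the distance from `w`, which reduces the formula to arithmetic.

Lower bound: every vertex is equidistant from both ends of two of the `p` cycle edges
`{i, i+1 mod p}`, so it resolves at most `p - 2` of them; adding the `p` constraints of these
edges gives `p ≤ (p - 2) ∑ ζ`. Upper bound: weight `1/2` on the four middle vertices
`p/2 - 3, …, p/2` works, since each edge is resolved by two of them; which two depends on
parities, and `4 ∣ p` makes `p/2` even.
-/

open Finset

/-- A local resolving function of a graph `G`: a map `ζ : V → [0,1]` such that for every
pair of adjacent vertices `u v`, the sum of `ζ` over the local resolving neighborhood
`R{u,v} = {w : d(w,u) ≠ d(w,v)}` is at least `1`. -/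
def IsLocalResolvingFunction {V : Type*} [Fintype V] (G : SimpleGraph V) (ζ : V → ℝ) : Prop :=
  (∀ w, ζ w ∈ Set.Icc (0 : ℝ) 1) ∧
    ∀ u v, G.Adj u v →
      1 ≤ ∑ w ∈ Finset.univ.filter (fun w => G.dist w u ≠ G.dist w v), ζ w

/-- The local fractional metric dimension of `G`: the minimum of `∑ v, ζ v` over all
local resolving functions `ζ` of `G`. -/
noncomputable def ldimf {V : Type*} [Fintype V] (G : SimpleGraph V) : ℝ :=
  sInf {s : ℝ | ∃ ζ : V → ℝ, IsLocalResolvingFunction G ζ ∧ s = ∑ v, ζ v}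

/-- The Toeplitz graph `T_n⟨S⟩` (vertices `0, …, n-1` standing for `1, …, n`):
two distinct vertices are adjacent iff their absolute difference lies in `S`. -/
def toeplitzGraph (n : ℕ) (S : Set ℕ) : SimpleGraph (Fin n) where
  Adj p q := p ≠ q ∧ Nat.dist (p : ℕ) (q : ℕ) ∈ S
  symm := ⟨fun p q ⟨h1, h2⟩ => ⟨h1.symm, by rwa [Nat.dist_comm]⟩⟩
  loopless := ⟨fun p ⟨h, _⟩ => h rfl⟩

namespace SimpleGraph

variable {V : Type*} {G : SimpleGraph V}

lemma Walk.le_add_length_of_lipschitz {f : V → ℕ} (hf : ∀ ⦃u v⦄, G.Adj u v → f v ≤ f u + 1)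
    {u v : V} (q : G.Walk u v) : f v ≤ f u + q.length := by
  induction q with
  | nil => simp
  | cons h _ ih => have := hf h; rw [length_cons]; omega

lemma exists_walk_length_le_of_descent {f : V → ℕ} {w : V}
    (hf : ∀ v ≠ w, ∃ u, G.Adj u v ∧ f u < f v) (v : V) : ∃ q : G.Walk w v, q.length ≤ f v := by
  induction h : f v using Nat.strong_induction_on generalizing v with
  | _ n ih =>
    by_cases hvw : v = w
    · subst hvw
      exact ⟨.nil, Nat.zero_le _⟩
    obtain ⟨u, huv, hlt⟩ := hf v hvw
    obtain ⟨q, hq⟩ := ih (f u) (h ▸ hlt) u rfl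
    exact ⟨q.concat huv, by rw [Walk.length_concat]; omega⟩

lemma dist_eq_of_lipschitz_of_descent {f : V → ℕ} {w : V} (hw : f w = 0)
    (hlip : ∀ ⦃u v⦄, G.Adj u v → f v ≤ f u + 1) (hdesc : ∀ v ≠ w, ∃ u, G.Adj u v ∧ f u < f v)
    (v : V) : G.dist w v = f v := by
  obtain ⟨q, hq⟩ := exists_walk_length_le_of_descent hdesc v
  obtain ⟨r, hr⟩ := q.reachable.exists_walk_length_eq_dist
  have := r.le_add_length_of_lipschitz hlip
  have := G.dist_le q
  omega

end SimpleGraph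

section LocalResolving

variable {V : Type*} [Fintype V] (G : SimpleGraph V)

lemma isLocalResolvingFunction_one : IsLocalResolvingFunction G 1 := by
  refine ⟨fun _ => ⟨zero_le_one, le_rfl⟩, fun u v huv => ?_⟩
  have hu : u ∈ univ.filter (fun w => G.dist w u ≠ G.dist w v) := by
    simp [SimpleGraph.dist_eq_one_iff_adj.2 huv]
  exact single_le_sum (f := (1 : V → ℝ)) (fun _ _ => zero_le_one) hu

lemma ldimf_le_sum {ζ : V → ℝ} (hζ : IsLocalResolvingFunction G ζ) : ldimf G ≤ ∑ v, ζ v :=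
  csInf_le ⟨0, by rintro _ ⟨ξ, hξ, rfl⟩; exact sum_nonneg fun v _ => (hξ.1 v).1⟩ ⟨ζ, hζ, rfl⟩

lemma le_ldimf {a : ℝ} (h : ∀ ζ, IsLocalResolvingFunction G ζ → a ≤ ∑ v, ζ v) : a ≤ ldimf G :=
  le_csInf ⟨_, 1, isLocalResolvingFunction_one G, rfl⟩ (by rintro _ ⟨ζ, hζ, rfl⟩; exact h ζ hζ)

lemma ldimf_le_card_div {M : Finset V} {k : ℕ} (hk : 0 < k)
    (hM : ∀ u v, G.Adj u v → k ≤ #{w ∈ M | G.dist w u ≠ G.dist w v}) :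
    ldimf G ≤ #M / k := by
  classical
  have hk' : (0 : ℝ) < k := by exact_mod_cast hk
  have hζ : IsLocalResolvingFunction G fun w => if w ∈ M then (k : ℝ)⁻¹ else 0 := by
    refine ⟨fun w => ?_, fun u v huv => ?_⟩
    · dsimp only
      split_ifs
      · exact ⟨by positivity, inv_le_one_of_one_le₀ (by exact_mod_cast hk)⟩
      · exact ⟨le_rfl, zero_le_one⟩
    · rw [sum_ite_mem, sum_const, nsmul_eq_mul, filter_inter, univ_inter, ← div_eq_mul_inv,
        one_le_div hk']
      exact_mod_cast hM u v huv
  calc ldimf G ≤ _ := ldimf_le_sum G hζ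
    _ = #M / k := by rw [sum_ite_mem, univ_inter, sum_const, nsmul_eq_mul, div_eq_mul_inv]

lemma card_div_le_ldimf {ι : Type*} [Fintype ι] (u v : ι → V) (hadj : ∀ i, G.Adj (u i) (v i))
    {c : ℕ} (hc : 0 < c) (hres : ∀ w, #{i | G.dist w (u i) ≠ G.dist w (v i)} ≤ c) :
    (Fintype.card ι : ℝ) / c ≤ ldimf G := by
  refine le_ldimf G fun ζ hζ => ?_
  rw [div_le_iff₀' (by exact_mod_cast hc)]
  calc (Fintype.card ι : ℝ) = ∑ _ : ι, (1 : ℝ) := by simp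
    _ ≤ ∑ i, ∑ w ∈ univ.filter (fun w => G.dist w (u i) ≠ G.dist w (v i)), ζ w :=
        sum_le_sum fun i _ => hζ.2 _ _ (hadj i)
    _ = ∑ w, ∑ _ ∈ univ.filter (fun i => G.dist w (u i) ≠ G.dist w (v i)), ζ w :=
        sum_comm' fun _ _ => by simp
    _ ≤ ∑ w, c * ζ w := by
        refine sum_le_sum fun w _ => ?_
        rw [sum_const, nsmul_eq_mul]
        exact mul_le_mul_of_nonneg_right (by exact_mod_cast hres w) (hζ.1 w).1
    _ = c * ∑ w, ζ w := (mul_sum ..).symm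

end LocalResolving

/-- `⌈|a - b| / 2⌉`, the distance between `a` and `b` in the square of the path on `ℕ`. -/
def pathSqDist (a b : ℕ) : ℕ := (a - b + (b - a) + 1) / 2

/-- The distance from `w` to `j` in `T_p⟨{1, 2, p-1}⟩`: along the square of the path, or
through the edge `{0, p-1}` in either direction. -/
def toeplitzDist (p w j : ℕ) : ℕ :=
  min (pathSqDist w j)
    (min (1 + pathSqDist w 0 + pathSqDist (p - 1) j) (1 + pathSqDist w (p - 1) + pathSqDist 0 j))

lemma toeplitzDist_choice (p w j : ℕ) :
    toeplitzDist p w j = pathSqDist w j ∨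
      toeplitzDist p w j = 1 + pathSqDist w 0 + pathSqDist (p - 1) j ∨
      toeplitzDist p w j = 1 + pathSqDist w (p - 1) + pathSqDist 0 j := by
  unfold toeplitzDist
  omega

lemma toeplitzDist_le_iff {p w j n : ℕ} :
    toeplitzDist p w j ≤ n ↔ pathSqDist w j ≤ n ∨
      1 + pathSqDist w 0 + pathSqDist (p - 1) j ≤ n ∨
      1 + pathSqDist w (p - 1) + pathSqDist 0 j ≤ n := by
  simp only [toeplitzDist, min_le_iff]

lemma toeplitzDist_lt_iff {p w j n : ℕ} :
    toeplitzDist p w j < n ↔ pathSqDist w j < n ∨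
      1 + pathSqDist w 0 + pathSqDist (p - 1) j < n ∨
      1 + pathSqDist w (p - 1) + pathSqDist 0 j < n := by
  simp only [toeplitzDist, min_lt_iff]

lemma toeplitzDist_le_add_one {p w a b : ℕ} (ha : a < p) (hb : b < p)
    (hab : a - b + (b - a) = 1 ∨ a - b + (b - a) = 2 ∨ a - b + (b - a) = p - 1) :
    toeplitzDist p w b ≤ toeplitzDist p w a + 1 := by
  rcases toeplitzDist_choice p w a with h | h | h <;> rw [h, toeplitzDist_le_iff] <;>
    simp only [pathSqDist] <;> omega

lemma exists_adj_toeplitzDist_lt {p w j : ℕ} (hw : w < p) (hj : j < p) (hjw : j ≠ w) :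
    ∃ u < p, (u - j + (j - u) = 1 ∨ u - j + (j - u) = 2 ∨ u - j + (j - u) = p - 1) ∧
      toeplitzDist p w u < toeplitzDist p w j := by
  rcases toeplitzDist_choice p w j with h | h | h <;> rw [h] <;>
    simp only [toeplitzDist_lt_iff, pathSqDist] at *
  · rcases Nat.lt_or_gt_of_ne hjw with hlt | hgt
    · exact ⟨min (j + 2) w, by omega, by omega, by omega⟩
    · exact ⟨max (j - 2) w, by omega, by omega, by omega⟩
  · by_cases hj0 : j = p - 1
    · exact ⟨0, by omega, by omega, by omega⟩
    · exact ⟨min (j + 2) (p - 1), by omega, by omega, by omega⟩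
  · by_cases hj0 : j = 0
    · exact ⟨p - 1, by omega, by omega, by omega⟩
    · exact ⟨j - 2, by omega, by omega, by omega⟩

lemma toeplitzDist_of_le_half {p w j : ℕ} (hw : w ≤ p / 2) :
    toeplitzDist p w j = min (pathSqDist w j) (1 + pathSqDist w 0 + pathSqDist (p - 1) j) := by
  have : pathSqDist w j ≤ 1 + pathSqDist w (p - 1) + pathSqDist 0 j := by
    unfold pathSqDist
    omega
  unfold toeplitzDist
  omega

set_option maxHeartbeats 1000000 in
lemma exists_middle_pair_toeplitzDist_ne {p u v : ℕ} (hp : 8 ≤ p) (hmod : p % 4 = 0) (hv : v < p)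
    (huv : v = u + 1 ∨ v = u + 2 ∨ (u = 0 ∧ v = p - 1)) :
    ∃ s t, s < t ∧ t < 4 ∧ toeplitzDist p (p / 2 - 3 + s) u ≠ toeplitzDist p (p / 2 - 3 + s) v ∧
      toeplitzDist p (p / 2 - 3 + t) u ≠ toeplitzDist p (p / 2 - 3 + t) v := by
  let d w j := min (pathSqDist w j) (1 + pathSqDist w 0 + pathSqDist (p - 1) j)
  suffices ∃ s t, s < t ∧ t < 4 ∧ d (p / 2 - 3 + s) u ≠ d (p / 2 - 3 + s) v ∧
      d (p / 2 - 3 + t) u ≠ d (p / 2 - 3 + t) v by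
    obtain ⟨s, t, hst, ht, hs, ht'⟩ := this
    refine ⟨s, t, hst, ht, ?_, ?_⟩ <;>
      rwa [toeplitzDist_of_le_half (by omega), toeplitzDist_of_le_half (by omega)]
  simp only [d, pathSqDist]
  -- Left of the middle block `{u, u+1}` is resolved by the `w` with `w - u` odd, right of it by
  -- those with `u - w` even; the exceptions are the edges meeting the block or `p - 1`.
  rcases huv with rfl | rfl | ⟨rfl, rfl⟩
  · obtain ⟨k, rfl | rfl⟩ := Nat.even_or_odd' u
    · by_cases hl : 2 * k < p / 2 - 3
      · exact ⟨0, 2, by omega, by omega, by omega, by omega⟩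
      by_cases hm : 2 * k = p / 2 - 2
      · exact ⟨1, 2, by omega, by omega, by omega, by omega⟩
      by_cases hr : 2 * k = p - 2
      · exact ⟨0, 3, by omega, by omega, by omega, by omega⟩
      · exact ⟨1, 3, by omega, by omega, by omega, by omega⟩
    · by_cases hl : 2 * k + 1 ≤ p / 2 - 3
      · exact ⟨1, 3, by omega, by omega, by omega, by omega⟩
      by_cases hm : 2 * k + 1 = p / 2 - 1
      · exact ⟨2, 3, by omega, by omega, by omega, by omega⟩
      · exact ⟨0, 2, by omega, by omega, by omega, by omega⟩
  · by_cases h1 : u + 1 = p / 2 - 3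
    · exact ⟨1, 2, by omega, by omega, by omega, by omega⟩
    by_cases h2 : u + 1 = p / 2
    · exact ⟨0, 1, by omega, by omega, by omega, by omega⟩
    by_cases h3 : u + 3 = p
    · exact ⟨2, 3, by omega, by omega, by omega, by omega⟩
    · exact ⟨0, 3, by omega, by omega, by omega, by omega⟩
  · exact ⟨0, 1, by omega, by omega, by omega, by omega⟩

lemma exists_two_toeplitzDist_ties {p w : ℕ} (hp : 8 ≤ p) (hw : w < p) :
    ∃ i₁ i₂, i₁ < i₂ ∧ i₂ + 1 < p ∧ toeplitzDist p w i₁ = toeplitzDist p w (i₁ + 1) ∧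
      toeplitzDist p w i₂ = toeplitzDist p w (i₂ + 1) := by
  -- `w` sees `w+1, w+2` at distance 1 and `w+3, w+4` at distance 2; mirrored near `p - 1`.
  simp only [toeplitzDist, pathSqDist]
  by_cases h : w + 4 < p
  · exact ⟨w + 1, w + 3, by omega, by omega, by omega, by omega⟩
  · exact ⟨w - 4, w - 2, by omega, by omega, by omega, by omega⟩

lemma toeplitzGraph_adj_iff {p : ℕ} {u v : Fin p} :
    (toeplitzGraph p {1, 2, p - 1}).Adj u v ↔
      (u : ℕ) ≠ v ∧ ((u : ℕ) - v + (v - u) = 1 ∨ (u : ℕ) - v + (v - u) = 2 ∨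
        (u : ℕ) - v + (v - u) = p - 1) := by
  simp [toeplitzGraph, Fin.val_eq_val, Nat.dist]

lemma toeplitzGraph_dist {p : ℕ} (w j : Fin p) :
    (toeplitzGraph p {1, 2, p - 1}).dist w j = toeplitzDist p w j := by
  refine SimpleGraph.dist_eq_of_lipschitz_of_descent (f := fun j : Fin p => toeplitzDist p w j)
    ?_ ?_ ?_ j
  · simp [toeplitzDist, pathSqDist]
  · intro a b hab
    rw [toeplitzGraph_adj_iff] at hab
    exact toeplitzDist_le_add_one a.2 b.2 hab.2
  · intro j hjw
    obtain ⟨u, hu, hadj, hlt⟩ := exists_adj_toeplitzDist_lt w.2 j.2 (Fin.val_ne_of_ne hjw)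
    refine ⟨⟨u, hu⟩, toeplitzGraph_adj_iff.2 ⟨?_, hadj⟩, hlt⟩
    simp only
    omega

lemma val_finRotate_of_add_one_lt {p : ℕ} {i : Fin p} (h : (i : ℕ) + 1 < p) :
    (finRotate p i : ℕ) = i + 1 := by
  obtain ⟨n, rfl⟩ : ∃ n, p = n + 1 := ⟨p - 1, by omega⟩
  exact coe_finRotate_of_ne_last (Fin.ne_of_val_ne (by simp; omega))

lemma toeplitzGraph_adj_finRotate {p : ℕ} (hp : 2 ≤ p) (i : Fin p) :
    (toeplitzGraph p {1, 2, p - 1}).Adj i (finRotate p i) := by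
  obtain ⟨n, rfl⟩ : ∃ n, p = n + 1 := ⟨p - 1, by omega⟩
  rw [toeplitzGraph_adj_iff, coe_finRotate]
  split_ifs with h <;> simp only [Fin.ext_iff, Fin.val_last] at h <;> omega

lemma card_filter_toeplitzGraph_dist_ne_finRotate_le {p : ℕ} (hp : 8 ≤ p) (w : Fin p) :
    #{i | (toeplitzGraph p {1, 2, p - 1}).dist w i ≠
      (toeplitzGraph p {1, 2, p - 1}).dist w (finRotate p i)} ≤ p - 2 := by
  obtain ⟨i₁, i₂, hlt, hi₂, h₁, h₂⟩ := exists_two_toeplitzDist_ties hp w.2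
  have htie : ∀ (i : ℕ) (hi : i + 1 < p), toeplitzDist p w i = toeplitzDist p w (i + 1) →
      (toeplitzGraph p {1, 2, p - 1}).dist w ⟨i, by omega⟩ =
        (toeplitzGraph p {1, 2, p - 1}).dist w (finRotate p ⟨i, by omega⟩) := by
    intro i hi h
    rwa [toeplitzGraph_dist, toeplitzGraph_dist, val_finRotate_of_add_one_lt hi]
  calc #{i | _} ≤ #({⟨i₁, by omega⟩, ⟨i₂, hi₂.trans' (by omega)⟩} : Finset (Fin p))ᶜ := by
        refine card_le_card fun i hi => ?_
        simp only [mem_filter, mem_univ, true_and] at hi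
        simp only [mem_compl, mem_insert, mem_singleton, not_or]
        constructor <;> rintro rfl
        · exact hi (htie i₁ (by omega) h₁)
        · exact hi (htie i₂ hi₂ h₂)
    _ = p - 2 := by
        rw [card_compl, card_pair (Fin.ne_of_val_ne hlt.ne), Fintype.card_fin]

lemma two_le_card_filter_toeplitzGraph_dist_ne {p : ℕ} (hp : 8 ≤ p) (hmod : p % 4 = 0)
    {M : Finset (Fin p)} (hM : ∀ w : Fin p, p / 2 - 3 ≤ w → (w : ℕ) ≤ p / 2 → w ∈ M) {u v : Fin p}
    (huv : (toeplitzGraph p {1, 2, p - 1}).Adj u v) :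
    2 ≤ #{w ∈ M | (toeplitzGraph p {1, 2, p - 1}).dist w u ≠
      (toeplitzGraph p {1, 2, p - 1}).dist w v} := by
  wlog hlt : (u : ℕ) < v generalizing u v
  · have hne := toeplitzGraph_adj_iff.1 huv
    simpa only [ne_comm] using this huv.symm (by omega)
  obtain ⟨s, t, hst, ht, hs, ht'⟩ := exists_middle_pair_toeplitzDist_ne (u := u) hp hmod v.2
    (by rw [toeplitzGraph_adj_iff] at huv; omega)
  refine one_lt_card.2 ⟨⟨p / 2 - 3 + s, by omega⟩, ?_, ⟨p / 2 - 3 + t, by omega⟩, ?_, ?_⟩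
  · simp only [mem_filter, toeplitzGraph_dist]
    exact ⟨hM _ (by simp) (by simp; omega), hs⟩
  · simp only [mem_filter, toeplitzGraph_dist]
    exact ⟨hM _ (by simp) (by simp; omega), ht'⟩
  · simp only [ne_eq, Fin.mk.injEq]
    omega

/-- For every integer `℘ ≥ 8` with `℘ ≡ 0 (mod 4)`,
`℘/(℘-2) ≤ ldimf(T_℘⟨{1, 2, ℘-1}⟩) ≤ 2`. -/
theorem ldimf_toeplitz_mod_four_zero (p : ℕ) (hp : 8 ≤ p) (hmod : p % 4 = 0) :
    (p : ℝ) / ((p : ℝ) - 2) ≤ ldimf (toeplitzGraph p {1, 2, p - 1}) ∧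
      ldimf (toeplitzGraph p {1, 2, p - 1}) ≤ 2 := by
  constructor
  · have h := card_div_le_ldimf _ id (finRotate p) (toeplitzGraph_adj_finRotate (by omega))
      (by omega) (card_filter_toeplitzGraph_dist_ne_finRotate_le hp)
    rwa [Fintype.card_fin, Nat.cast_sub (by omega), Nat.cast_ofNat] at h
  · set M : Finset (Fin p) := Icc ⟨p / 2 - 3, by omega⟩ ⟨p / 2, by omega⟩
    have hM : #M = 4 := by simp only [M, Fin.card_Icc]; omega
    have h := ldimf_le_card_div _ (M := M) two_pos fun u v huv =>
      two_le_card_filter_toeplitzGraph_dist_ne hp hmod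
        (fun w h₁ h₂ => mem_Icc.2 ⟨Fin.le_def.2 h₁, Fin.le_def.2 h₂⟩) huv
    rwa [hM, show ((4 : ℕ) : ℝ) / (2 : ℕ) = 2 by norm_num] at h
end

section
/- For every prime p > 3, the Toeplitz graph T_{3p}⟨{3, p}⟩ satisfies ldim_f(T_{3p}⟨{3, p}⟩) = 1. -/
open Finset

/-!
Both 3 and `p` are odd, so every edge of `T_{3p}⟨{3, p}⟩` joins vertices of opposite parity, and
since `3 ∤ p` the steps `±3` and `±p` connect all vertices. In a connected bipartite graph the
distances from any vertex to the two ends of an edge have different parities, so every vertex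
resolves every edge: the constant function `1 / |V|` is a local resolving function of total
weight 1, while a single edge already forces total weight at least 1.
-/

namespace SimpleGraph

variable {V : Type*} {G : SimpleGraph V}

theorem IsBipartite.dist_ne_of_adj (hconn : G.Connected) (hbip : G.IsBipartite) {u v : V}
    (huv : G.Adj u v) (w : V) : G.dist w u ≠ G.dist w v := by
  obtain ⟨c⟩ := hbip
  let c' : G.Coloring Bool := G.recolorOfEquiv finTwoEquiv c
  have hparity (x : V) : Even (G.dist w x) ↔ (c' w ↔ c' x) := by
    obtain ⟨W, hW⟩ := hconn.exists_walk_length_eq_dist w x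
    exact hW ▸ c'.even_length_iff_congr W
  intro h
  have := (hparity u).symm.trans (h ▸ hparity v)
  exact c'.valid huv (Bool.eq_iff_iff.mpr (by tauto))

end SimpleGraph

section LocalResolving

variable {V : Type*} [Fintype V] {G : SimpleGraph V}

theorem IsLocalResolvingFunction.one_le_sum {ζ : V → ℝ} (hζ : IsLocalResolvingFunction G ζ)
    {u v : V} (huv : G.Adj u v) : 1 ≤ ∑ w, ζ w :=
  (hζ.2 u v huv).trans <|
    sum_le_sum_of_subset_of_nonneg (filter_subset _ _) fun w _ _ => (hζ.1 w).1

theorem isLocalResolvingFunction_const_inv_card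
    (hres : ∀ u v, G.Adj u v → ∀ w, G.dist w u ≠ G.dist w v) :
    IsLocalResolvingFunction G fun _ => (Fintype.card V : ℝ)⁻¹ := by
  refine ⟨fun w => ⟨by positivity, inv_le_one_of_one_le₀ ?_⟩, fun u v huv => ?_⟩
  · exact_mod_cast Fintype.card_pos_iff.mpr ⟨w⟩
  · have : Nonempty V := ⟨u⟩
    simp [filter_true_of_mem fun w _ => hres u v huv w]

theorem ldimf_eq_one_of_forall_dist_ne (hres : ∀ u v, G.Adj u v → ∀ w, G.dist w u ≠ G.dist w v)
    {u v : V} (huv : G.Adj u v) : ldimf G = 1 := by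
  have : Nonempty V := ⟨u⟩
  refine IsLeast.csInf_eq ⟨⟨_, isLocalResolvingFunction_const_inv_card hres, by simp⟩, ?_⟩
  rintro s ⟨ζ, hζ, rfl⟩
  exact hζ.one_le_sum huv

theorem ldimf_eq_one_of_isBipartite (hconn : G.Connected) (hbip : G.IsBipartite) {u v : V}
    (huv : G.Adj u v) : ldimf G = 1 :=
  ldimf_eq_one_of_forall_dist_ne (fun _ _ h => hbip.dist_ne_of_adj hconn h) huv

end LocalResolving

section Toeplitz

open SimpleGraph

variable {n a : ℕ} {S : Set ℕ}

theorem toeplitzGraph_adj_of_val_eq_add (ha : a ∈ S) (ha0 : 0 < a) {i j : Fin n}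
    (hij : (j : ℕ) = i + a) : (toeplitzGraph n S).Adj i j :=
  ⟨fun h => by simp [h] at hij; omega, by simpa [Nat.dist, hij] using ha⟩

theorem toeplitzGraph_reachable_of_modEq (ha : a ∈ S) (ha0 : 0 < a) {i j : Fin n}
    (hij : (i : ℕ) ≡ j [MOD a]) : (toeplitzGraph n S).Reachable i j := by
  suffices h : ∀ k (x y : Fin n), (y : ℕ) = x + a * k → (toeplitzGraph n S).Reachable x y by
    rcases le_total (i : ℕ) j with hle | hle
    · obtain ⟨k, hk⟩ := (Nat.modEq_iff_dvd' hle).mp hij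
      exact h k i j (by omega)
    · obtain ⟨k, hk⟩ := (Nat.modEq_iff_dvd' hle).mp hij.symm
      exact (h k j i (by omega)).symm
  intro k
  induction k with
  | zero =>
    intro x y hxy
    obtain rfl : x = y := Fin.ext (by simpa using hxy.symm)
    rfl
  | succ k ih =>
    intro x y hxy
    rw [Nat.mul_succ, ← add_assoc] at hxy
    let m : Fin n := ⟨x + a * k, by omega⟩
    exact (ih x m rfl).trans (toeplitzGraph_adj_of_val_eq_add ha ha0 hxy).reachable

theorem toeplitzGraph_isBipartite (hS : ∀ s ∈ S, Odd s) : (toeplitzGraph n S).IsBipartite :=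
  (Coloring.mk (fun i : Fin n => decide (Even (i : ℕ))) fun {i j} h => by
    have := Nat.odd_iff.mp (hS _ h.2)
    simp only [Nat.dist] at this
    simp only [ne_eq, decide_eq_decide, Nat.even_iff]
    omega).colorable

theorem toeplitzGraph_three_mul_connected {p : ℕ} (hp : ¬ 3 ∣ p) :
    (toeplitzGraph (3 * p) {3, p}).Connected := by
  have hp0 : 0 < p := Nat.pos_of_ne_zero (by rintro rfl; simp at hp)
  let G := toeplitzGraph (3 * p) {3, p}
  let zero : Fin (3 * p) := ⟨0, by omega⟩
  let one : Fin (3 * p) := ⟨p, by omega⟩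
  let two : Fin (3 * p) := ⟨2 * p, by omega⟩
  have hone : G.Reachable zero one :=
    (toeplitzGraph_adj_of_val_eq_add (by simp) hp0 (by simp [zero, one])).reachable
  have htwo : G.Reachable one two :=
    (toeplitzGraph_adj_of_val_eq_add (by simp) hp0 (by simp [one, two]; ring)).reachable
  have hmod {v w : Fin (3 * p)} (h : (v : ℕ) % 3 = w % 3) : G.Reachable v w :=
    toeplitzGraph_reachable_of_modEq (by simp) (by norm_num) h
  -- `0, p, 2p` meet all three residues mod 3.
  have hpmod : p % 3 = 1 ∨ p % 3 = 2 := by omega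
  refine (connected_iff_exists_forall_reachable G).mpr ⟨zero, fun v => ?_⟩
  rcases (by omega : 0 = (v : ℕ) % 3 ∨ p % 3 = (v : ℕ) % 3 ∨ 2 * p % 3 = (v : ℕ) % 3)
    with h | h | h
  · exact hmod h
  · exact hone.trans (hmod h)
  · exact hone.trans (htwo.trans (hmod h))

end Toeplitz

/-- For every prime `p > 3`, `ldimf(T_{3p}⟨{3, p}⟩) = 1`. -/
theorem ldimf_toeplitz_three_p (p : ℕ) (hp : p.Prime) (h3 : 3 < p) :
    ldimf (toeplitzGraph (3 * p) {3, p}) = 1 := by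
  have hodd : Odd p := hp.odd_of_ne_two (by omega)
  have hndvd : ¬ 3 ∣ p := fun h => by
    have := (Nat.prime_dvd_prime_iff_eq Nat.prime_three hp).mp h
    omega
  refine ldimf_eq_one_of_isBipartite (toeplitzGraph_three_mul_connected hndvd)
    (toeplitzGraph_isBipartite ?_) (u := ⟨0, by omega⟩) (v := ⟨3, by omega⟩)
    (toeplitzGraph_adj_of_val_eq_add (a := 3) (by simp) (by norm_num) rfl)
  rintro s (rfl | rfl)
  exacts [by decide, hodd]
end
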